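/- For n ≥ 2, the fan graph F_{1,n} satisfies: α(F_{1,n}) + α(L(F_{1,n})) = n if n is even and n + 1 if n is odd; and α(F_{1,n}) · α(L(F_{1,n})) = n²/4 if n is even and (n+1)²/4 if n is odd. -/

import Mathlib

open SimpleGraph

/-- The independence number of a graph: the maximum cardinality of a set of
pairwise non-adjacent vertices. -/
noncomputable def indepNum {V : Type*} (G : SimpleGraph V) : ℕ :=
  sSup {k | ∃ s : Set V, s.Pairwise (fun a b => ¬ G.Adj a b) ∧ s.ncard = k}

/-- The matching number of a graph: the maximum cardinality of a set of edges of
the graph, no two of which share an endpoint. -/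
noncomputable def matchNum {V : Type*} (G : SimpleGraph V) : ℕ :=
  sSup {k | ∃ M : Set (Sym2 V), M ⊆ G.edgeSet ∧
    (M.Pairwise fun e f => ∀ v : V, ¬(v ∈ e ∧ v ∈ f)) ∧ M.ncard = k}

/-- The fan graph `F_{1,n}`: the join `K_1 + P_n`, i.e. a path on `n` vertices
together with an apex vertex (`none`) adjacent to every path vertex. -/
def fanGraph (n : ℕ) : SimpleGraph (Option (Fin n)) :=
  SimpleGraph.fromRel fun x y =>
    match x, y with
    | none, some _ => True
    | some a, some b => (pathGraph n).Adj a b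
    | _, _ => False

/-!
Every independent set of the line graph is a matching, so it covers twice its size among the
`n + 1` vertices of the fan. An independent set of the fan is either the apex alone or an
independent set of the path, which meets each pair `{2i, 2i+1}` at most once. The even path
vertices, and the matching of the pairs `{2i, 2i+1}` completed by the apex edge to the last
vertex when `n` is odd, attain these bounds, so both independence numbers equal `⌈n/2⌉`.
-/

theorem indepNum_eq_of_isIndepSet {V : Type*} {G : SimpleGraph V} {k : ℕ}
    (hw : ∃ s : Set V, G.IsIndepSet s ∧ s.ncard = k)
    (hub : ∀ s : Set V, G.IsIndepSet s → s.ncard ≤ k) :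
    _root_.indepNum G = k :=
  le_antisymm (csSup_le ⟨k, hw⟩ fun _ ⟨s, hs, hk⟩ => hk ▸ hub s hs)
    (le_csSup ⟨k, fun _ ⟨s, hs, hk⟩ => hk ▸ hub s hs⟩ hw)

namespace SimpleGraph

theorem two_mul_ncard_le_of_isIndepSet_lineGraph {V : Type*} [Finite V] {G : SimpleGraph V}
    {s : Set G.edgeSet} (hs : G.lineGraph.IsIndepSet s) : 2 * s.ncard ≤ Nat.card V := by
  classical
  have := Fintype.ofFinite V
  set t := s.toFinite.toFinset
  have hdisj : (t : Set G.edgeSet).PairwiseDisjoint fun e => (e : Sym2 V).toFinset := by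
    intro e he f hf hne
    refine Finset.disjoint_left.2 fun v hve hvf => hs (by simpa [t] using he)
      (by simpa [t] using hf) hne (lineGraph_adj_iff_exists.2 ⟨hne, v, ?_, ?_⟩)
    · simpa using hve
    · simpa using hvf
  calc 2 * s.ncard = ∑ e ∈ t, (e : Sym2 V).toFinset.card := by
        rw [Finset.sum_congr rfl fun e _ =>
            Sym2.card_toFinset_of_not_isDiag _ (G.not_isDiag_of_mem_edgeSet e.2),
          Finset.sum_const, smul_eq_mul, mul_comm, Set.ncard_eq_toFinset_card _ s.toFinite]
    _ = (t.biUnion fun e => (e : Sym2 V).toFinset).card := (Finset.card_biUnion hdisj).symm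
    _ ≤ Nat.card V := Nat.card_eq_fintype_card (α := V) ▸ Finset.card_le_univ _

theorem ncard_le_of_isIndepSet_pathGraph {n : ℕ} {s : Set (Fin n)}
    (hs : (pathGraph n).IsIndepSet s) : s.ncard ≤ (n + 1) / 2 := by
  calc s.ncard ≤ (Finset.range ((n + 1) / 2) : Set ℕ).ncard := by
        refine Set.ncard_le_ncard_of_injOn (fun a => a.val / 2) (fun a _ => ?_) ?_ (Set.toFinite _)
        · simp only [Finset.coe_range, Set.mem_Iio]
          omega
        · intro a ha b hb hab
          by_contra hne
          exact hs ha hb hne (pathGraph_adj.2 (by simp only at hab; omega))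
    _ = (n + 1) / 2 := by simp

theorem isIndepSet_pathGraph_even (n : ℕ) : (pathGraph n).IsIndepSet {a | Even a.val} := by
  intro a ha b hb _ hab
  simp only [Set.mem_ofPred_eq, pathGraph_adj, Nat.even_iff] at ha hb hab
  omega

theorem ncard_even_fin (n : ℕ) : {a : Fin n | Even a.val}.ncard = (n + 1) / 2 := by
  let double : Fin ((n + 1) / 2) → Fin n := fun i => ⟨2 * i, by omega⟩
  have hdouble : Function.Injective double := fun i j h => by
    simp only [double, Fin.mk.injEq] at h
    omega
  have hrange : {a : Fin n | Even a.val} = Set.range double := by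
    ext a
    simp only [Set.mem_ofPred_eq, Set.mem_range, double, Fin.ext_iff, even_iff_two_dvd]
    exact ⟨fun ⟨k, hk⟩ => ⟨⟨k, by omega⟩, hk.symm⟩, fun ⟨i, hi⟩ => ⟨i, hi.symm⟩⟩
  rw [hrange, ← Set.image_univ, Set.ncard_image_of_injective _ hdouble, Set.ncard_univ,
    Nat.card_fin]

theorem fanGraph_adj_some_some {n : ℕ} {a b : Fin n} :
    (fanGraph n).Adj (some a) (some b) ↔ (pathGraph n).Adj a b := by
  simp only [fanGraph, fromRel_adj, ne_eq, Option.some.injEq, (pathGraph n).adj_comm b a,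
    or_self_iff]
  exact ⟨And.right, fun h => ⟨h.ne, h⟩⟩

theorem fanGraph_adj_none_some {n : ℕ} (a : Fin n) : (fanGraph n).Adj none (some a) := by
  simp [fanGraph]

theorem ncard_le_of_isIndepSet_fanGraph {n : ℕ} (hn : 1 ≤ n) {s : Set (Option (Fin n))}
    (hs : (fanGraph n).IsIndepSet s) : s.ncard ≤ (n + 1) / 2 := by
  by_cases hnone : none ∈ s
  · have hsub : s ⊆ {none} := by
      rintro (_ | a) ha
      · rfl
      · exact absurd (fanGraph_adj_none_some a) (hs hnone ha (by simp))
    calc s.ncard ≤ ({none} : Set (Option (Fin n))).ncard := Set.ncard_le_ncard hsub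
      _ ≤ (n + 1) / 2 := by rw [Set.ncard_singleton]; omega
  · have hsub : s ⊆ Set.range some := by
      rintro (_ | a) ha
      · exact absurd ha hnone
      · exact ⟨a, rfl⟩
    rw [← Set.ncard_preimage_of_injective_subset_range (Option.some_injective _) hsub]
    exact ncard_le_of_isIndepSet_pathGraph fun a ha b hb hab =>
      fanGraph_adj_some_some.not.1 (hs ha hb (by simpa using hab))

theorem indepNum_fanGraph {n : ℕ} (hn : 1 ≤ n) :
    _root_.indepNum (fanGraph n) = (n + 1) / 2 := by
  refine indepNum_eq_of_isIndepSet ⟨some '' {a | Even a.val}, ?_, ?_⟩ fun s hs =>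
    ncard_le_of_isIndepSet_fanGraph hn hs
  · rintro _ ⟨a, ha, rfl⟩ _ ⟨b, hb, rfl⟩ hab
    rw [fanGraph_adj_some_some]
    exact isIndepSet_pathGraph_even n ha hb (by simpa using hab)
  · rw [Set.ncard_image_of_injective _ (Option.some_injective _), ncard_even_fin]

def fanMatching (n : ℕ) (i : Fin ((n + 1) / 2)) : Sym2 (Option (Fin n)) :=
  if h : 2 * i.val + 1 < n then s(some ⟨2 * i, by omega⟩, some ⟨2 * i + 1, h⟩)
  else s(none, some ⟨2 * i, by omega⟩)

theorem fanMatching_mem_edgeSet {n : ℕ} (i : Fin ((n + 1) / 2)) :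
    fanMatching n i ∈ (fanGraph n).edgeSet := by
  unfold fanMatching
  split_ifs
  · exact fanGraph_adj_some_some.2 (pathGraph_adj.2 (Or.inl rfl))
  · exact fanGraph_adj_none_some _

theorem eq_of_mem_fanMatching {n : ℕ} {i j : Fin ((n + 1) / 2)} {v : Option (Fin n)}
    (hi : v ∈ fanMatching n i) (hj : v ∈ fanMatching n j) : i = j := by
  have := i.2
  have := j.2
  unfold fanMatching at hi hj
  apply Fin.ext
  split_ifs at hi hj <;>
    simp only [Sym2.mem_iff] at hi hj <;>
    rcases hi with rfl | rfl <;>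
    simp_all only [Option.some.injEq, Fin.ext_iff, reduceCtorEq, false_or, or_false] <;>
    omega

theorem indepNum_lineGraph_fanGraph (n : ℕ) :
    _root_.indepNum (fanGraph n).lineGraph = (n + 1) / 2 := by
  let e : Fin ((n + 1) / 2) → (fanGraph n).edgeSet :=
    fun i => ⟨fanMatching n i, fanMatching_mem_edgeSet i⟩
  have he : Function.Injective e := fun i j h => by
    have hij : fanMatching n i = fanMatching n j := congrArg Subtype.val h
    exact eq_of_mem_fanMatching (Sym2.out_fst_mem _) (hij ▸ Sym2.out_fst_mem (fanMatching n j))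
  refine indepNum_eq_of_isIndepSet ⟨Set.range e, ?_, ?_⟩ fun s hs => ?_
  · rintro _ ⟨i, rfl⟩ _ ⟨j, rfl⟩ hij hadj
    obtain ⟨-, v, hvi, hvj⟩ := lineGraph_adj_iff_exists.1 hadj
    exact hij (congrArg e (eq_of_mem_fanMatching hvi hvj))
  · rw [← Set.image_univ, Set.ncard_image_of_injective _ he, Set.ncard_univ, Nat.card_fin]
  · have := two_mul_ncard_le_of_isIndepSet_lineGraph hs
    rw [Nat.card_eq_fintype_card, Fintype.card_option, Fintype.card_fin] at this
    omega

end SimpleGraph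

/-- For `n ≥ 2`: `α(F_{1,n}) + α(L(F_{1,n}))` is `n` if `n` is even and `n + 1`
if `n` is odd, and `α(F_{1,n}) · α(L(F_{1,n}))` is `n²/4` if `n` is even and
`(n+1)²/4` if `n` is odd. -/
theorem fan_indepNum_add_mul_indepNum_lineGraph (n : ℕ) (hn : 2 ≤ n) :
    (Even n → _root_.indepNum (fanGraph n) + _root_.indepNum (fanGraph n).lineGraph = n) ∧
    (Odd n → _root_.indepNum (fanGraph n) + _root_.indepNum (fanGraph n).lineGraph = n + 1) ∧
    (Even n → _root_.indepNum (fanGraph n) * _root_.indepNum (fanGraph n).lineGraph = n ^ 2 / 4) ∧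
    (Odd n → _root_.indepNum (fanGraph n) * _root_.indepNum (fanGraph n).lineGraph = (n + 1) ^ 2 / 4) := by
  rw [indepNum_fanGraph (by omega), indepNum_lineGraph_fanGraph]
  refine ⟨fun ⟨m, hm⟩ => by omega, fun ⟨m, hm⟩ => by omega, fun ⟨m, hm⟩ => ?_, fun ⟨m, hm⟩ => ?_⟩
  · rw [show (n + 1) / 2 = m by omega, hm, show (m + m) ^ 2 = m * m * 4 by ring,
      Nat.mul_div_cancel _ (by norm_num)]
  · rw [show (n + 1) / 2 = m + 1 by omega, hm,
      show (2 * m + 1 + 1) ^ 2 = (m + 1) * (m + 1) * 4 by ring, Nat.mul_div_cancel _ (by norm_num)]
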